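/- If a label ranking model h is top-k calibrated, then h is rankwise top-k calibrated: if for all size-k subsets ℬ, rankings ρ of ℬ, and attained top-k marginal distributions q, P(Π_ℬ = ρ | proj_𝒯 h(X) = q) = q[ρ], then for all ℬ, ρ, and α ∈ [0,1] with P(proj_𝒯 h(X)[ρ] = α) > 0, P(Π_ℬ = ρ | proj_𝒯 h(X)[ρ] = α) = α. -/
import Mathlib


open scoped Classical
noncomputable section

/-- Probability of an event `A` under a weight function `w` on a finite space. -/
def Pr {Ω : Type*} [Fintype Ω] (w : Ω → ℝ) (A : Set Ω) : ℝ :=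
  ∑ ω, if ω ∈ A then w ω else 0

/-- Conditional probability `P(A | B)`. -/
def condPr {Ω : Type*} [Fintype Ω] (w : Ω → ℝ) (A B : Set Ω) : ℝ :=
  Pr w (A ∩ B) / Pr w B

/-- Sub-k marginal of a distribution `p` over full rankings: the probability of
the sub-ranking `ρ` of `ℬ` is the total mass of full rankings containing `ρ`. -/
def subProj {ι : Type*} [Fintype ι] [DecidableEq ι] (ℬ : Finset ι)
    (p : (ι ≃ Fin (Fintype.card ι)) → ℝ) (ρ : {x // x ∈ ℬ} ≃ Fin ℬ.card) : ℝ :=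
  ∑ π : ι ≃ Fin (Fintype.card ι),
    if (∀ i j : {x // x ∈ ℬ}, ρ i < ρ j ↔ π i.1 < π j.1) then p π else 0

/-- Top-k marginal of a distribution `p` over full rankings: the probability of
the sub-ranking `ρ` of `ℬ` is the total mass of full rankings whose top `|ℬ|`
positions coincide with `ρ`. -/
def topProj {ι : Type*} [Fintype ι] [DecidableEq ι] (ℬ : Finset ι)
    (p : (ι ≃ Fin (Fintype.card ι)) → ℝ) (ρ : {x // x ∈ ℬ} ≃ Fin ℬ.card) : ℝ :=
  ∑ π : ι ≃ Fin (Fintype.card ι),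
    if (∀ i : {x // x ∈ ℬ}, (π i.1 : ℕ) = (ρ i : ℕ)) then p π else 0

lemma Pr_nonneg' {Ω : Type*} [Fintype Ω] (w : Ω → ℝ) (hw0 : ∀ ω, 0 ≤ w ω) (A : Set Ω) :
    0 ≤ Pr w A := by
  refine Finset.sum_nonneg fun ω _ => ?_
  split
  · exact hw0 ω
  · exact le_rfl

lemma Pr_inter_le' {Ω : Type*} [Fintype Ω] (w : Ω → ℝ) (hw0 : ∀ ω, 0 ≤ w ω) (A B : Set Ω) :
    Pr w (A ∩ B) ≤ Pr w B := by
  refine Finset.sum_le_sum fun ω _ => ?_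
  by_cases hAB : ω ∈ A ∩ B
  · rw [if_pos hAB, if_pos hAB.2]
  · rw [if_neg hAB]
    split
    · exact hw0 ω
    · exact le_rfl

/-- If a label ranking model `h` is top-k calibrated, then `h` is rankwise
top-k calibrated: if for all size-`k` subsets `ℬ`, rankings `ρ` of `ℬ`, and
attained top-k marginal distributions `q`,
`P(Π_ℬ = ρ | proj_𝒯 h(X) = q) = q ℬ ρ`, then for all such `ℬ`, `ρ`, and
`α ∈ [0,1]` with `P(proj_𝒯 h(X) ρ = α) > 0`, `P(Π_ℬ = ρ | proj_𝒯 h(X) ρ = α) = α`. -/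
theorem topk_calibration_implies_rankwise_topk_calibration
    {Ω 𝒳 ι : Type*} [Fintype Ω] [Fintype ι] [DecidableEq ι]
    (w : Ω → ℝ) (hw0 : ∀ ω, 0 ≤ w ω) (hw1 : ∑ ω, w ω = 1)
    (X : Ω → 𝒳) (R : Ω → (ι ≃ Fin (Fintype.card ι)))
    (h : 𝒳 → (ι ≃ Fin (Fintype.card ι)) → ℝ)
    (hdist : ∀ x, (∀ π, 0 ≤ h x π) ∧ ∑ π, h x π = 1)
    (k : ℕ) (hk : k ≤ Fintype.card ι)
    (topcal : ∀ ℬ : Finset ι, ℬ.card = k →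
      ∀ (ρ : {x // x ∈ ℬ} ≃ Fin ℬ.card)
        (q : (s : Finset ι) → ({x // x ∈ s} ≃ Fin s.card) → ℝ),
        0 < Pr w {ω | ∀ s : Finset ι, s.card = k →
            ∀ ρ' : {x // x ∈ s} ≃ Fin s.card, topProj s (h (X ω)) ρ' = q s ρ'} →
        condPr w {ω | ∀ i j : {x // x ∈ ℬ}, ρ i < ρ j ↔ R ω i.1 < R ω j.1}
          {ω | ∀ s : Finset ι, s.card = k →
            ∀ ρ' : {x // x ∈ s} ≃ Fin s.card, topProj s (h (X ω)) ρ' = q s ρ'} = q ℬ ρ) :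
    ∀ ℬ : Finset ι, ℬ.card = k →
      ∀ (ρ : {x // x ∈ ℬ} ≃ Fin ℬ.card) (α : ℝ), α ∈ Set.Icc (0 : ℝ) 1 →
        0 < Pr w {ω | topProj ℬ (h (X ω)) ρ = α} →
        condPr w {ω | ∀ i j : {x // x ∈ ℬ}, ρ i < ρ j ↔ R ω i.1 < R ω j.1}
          {ω | topProj ℬ (h (X ω)) ρ = α} = α := by
  intro ℬ hB ρ α hα hpos
  classical
  set g : Ω → ((s : Finset ι) → ({x // x ∈ s} ≃ Fin s.card) → ℝ) :=
    fun ω s ρ' => if s.card = k then topProj s (h (X ω)) ρ' else 0 with hg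
  have hgB : ∀ ω, g ω ℬ ρ = topProj ℬ (h (X ω)) ρ := by
    intro ω; simp [hg, hB]
  have hBset : {ω | topProj ℬ (h (X ω)) ρ = α} = {ω | g ω ℬ ρ = α} := by
    ext ω; simp [hgB]
  set A : Set Ω := {ω | ∀ i j : {x // x ∈ ℬ}, ρ i < ρ j ↔ R ω i.1 < R ω j.1} with hA
  set V : Finset ((s : Finset ι) → ({x // x ∈ s} ≃ Fin s.card) → ℝ) :=
    (Finset.univ.image g).filter (fun v => v ℬ ρ = α) with hV
  have hmemV : ∀ ω, g ω ∈ V ↔ g ω ℬ ρ = α := by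
    intro ω
    simp [hV, Finset.mem_filter, Finset.mem_image]
  have hfib : ∀ v ∈ V, {ω | ∀ s : Finset ι, s.card = k →
      ∀ ρ' : {x // x ∈ s} ≃ Fin s.card, topProj s (h (X ω)) ρ' = v s ρ'} = {ω | g ω = v} := by
    intro v hv
    obtain ⟨ω₀, -, hω₀⟩ := Finset.mem_image.mp (Finset.mem_filter.mp hv).1
    ext ω
    simp only [Set.mem_setOf_eq]
    constructor
    · intro hωv
      funext s ρ'
      by_cases hs : s.card = k
      · simpa [hg, hs] using hωv s hs ρ'
      · have : g ω₀ s ρ' = 0 := by simp [hg, hs]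
        simp [hg, hs, ← hω₀, this]
    · intro hωv s hs ρ'
      have := congrFun (congrFun hωv s) ρ'
      simpa [hg, hs] using this
  -- decomposition over fibers
  have hdecomp : ∀ S : Set Ω, Pr w (S ∩ {ω | g ω ℬ ρ = α}) = ∑ v ∈ V, Pr w (S ∩ {ω | g ω = v}) := by
    intro S
    unfold Pr
    rw [Finset.sum_comm]
    refine Finset.sum_congr rfl fun ω _ => ?_
    refine Eq.symm ?_
    by_cases hS : ω ∈ S
    · by_cases hα' : g ω ℬ ρ = α
      · refine (Finset.sum_eq_single_of_mem (g ω) ((hmemV ω).mpr hα')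
          fun v _ hne => ?_).trans ?_
        · refine if_neg fun hmem => ?_
          have h2 : g ω = v := hmem.2
          exact hne h2.symm
        · simp [Set.mem_inter_iff, hS, hα']
      · refine (Finset.sum_eq_zero fun v hv => ?_).trans ?_
        · have hvα : v ℬ ρ = α := (Finset.mem_filter.mp hv).2
          refine if_neg fun hmem => ?_
          have h2 : g ω = v := hmem.2
          exact hα' (h2 ▸ hvα)
        · simp [Set.mem_inter_iff, hα']
    · refine (Finset.sum_eq_zero fun v _ => ?_).trans ?_
      · exact if_neg fun hmem => hS hmem.1
      · simp [Set.mem_inter_iff, hS]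
  have hdecompB : Pr w {ω | g ω ℬ ρ = α} = ∑ v ∈ V, Pr w {ω | g ω = v} := by
    have := hdecomp Set.univ
    simp only [Set.univ_inter] at this
    exact this
  have hterm : ∀ v ∈ V, Pr w (A ∩ {ω | g ω = v}) = α * Pr w {ω | g ω = v} := by
    intro v hv
    by_cases hp : 0 < Pr w {ω | g ω = v}
    · have hcal := topcal ℬ hB ρ v (by rw [hfib v hv]; exact hp)
      rw [hfib v hv] at hcal
      have hα' : v ℬ ρ = α := (Finset.mem_filter.mp hv).2
      rw [hα'] at hcal
      unfold condPr at hcal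
      rw [div_eq_iff (ne_of_gt hp)] at hcal
      linarith [hcal]
    · have h0 : Pr w {ω | g ω = v} = 0 :=
        le_antisymm (not_lt.mp hp) (Pr_nonneg' w hw0 _)
      have h1 : Pr w (A ∩ {ω | g ω = v}) = 0 :=
        le_antisymm (h0 ▸ Pr_inter_le' w hw0 A _) (Pr_nonneg' w hw0 _)
      rw [h0, h1]; ring
  rw [hBset]
  unfold condPr
  rw [hdecomp A, Finset.sum_congr rfl hterm, ← Finset.mul_sum, ← hdecompB]
  have hBpos : 0 < Pr w {ω | g ω ℬ ρ = α} := by rw [← hBset]; exact hpos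
  field_simp
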